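/- Let γ = (γ₀, γ₁)σ be an automorphism of the binary tree acting nontrivially on level one, with sections γ₀, γ₁. Then an automorphism β = (β₀, β₁)σ (also acting nontrivially on level one) is conjugate to γ in Ω if and only if β₀β₁ is conjugate to γ₀γ₁ in Ω. -/

import Mathlib

namespace BinTree

/-- Vertices of the infinite rooted binary tree: finite words over `{0,1}`. -/
abbrev Vertex : Type := List Bool

/-- A function on vertices is a tree automorphism function if it preserves lengths
(levels) and prefixes. -/
def IsTreeAutFun (f : Vertex → Vertex) : Prop :=
  (∀ v, (f v).length = v.length) ∧ ∀ v w : Vertex, (f (v ++ w)).take v.length = f v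

/-- `Ω`: the automorphism group of the infinite rooted binary tree, realized as the
subgroup of permutations of the set of vertices preserving the tree structure. -/
def TreeAut : Subgroup (Equiv.Perm Vertex) where
  carrier := {e | IsTreeAutFun ⇑e}
  one_mem' := ⟨fun _ => rfl, fun v w => by
    simpa using List.take_left (l₁ := v) (l₂ := w)⟩
  mul_mem' := by
    rintro a b ha hb
    obtain ⟨ha1, ha2⟩ := ha
    obtain ⟨hb1, hb2⟩ := hb
    refine ⟨fun v => ?_, fun v w => ?_⟩
    · simp [Equiv.Perm.mul_apply, ha1, hb1]
    · have hb' : b (v ++ w) = b v ++ (b (v ++ w)).drop v.length := by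
        conv_lhs => rw [← List.take_append_drop v.length (b (v ++ w)), hb2]
      have hlen : (b v).length = v.length := hb1 v
      calc ((a * b) (v ++ w)).take v.length
          = (a (b v ++ (b (v ++ w)).drop v.length)).take v.length := by
            rw [Equiv.Perm.mul_apply, ← hb']
        _ = a (b v) := by rw [← hlen]; exact ha2 _ _
        _ = (a * b) v := rfl
  inv_mem' := by
    intro a ha
    obtain ⟨ha1, ha2⟩ := ha
    show IsTreeAutFun ⇑a⁻¹
    have hlen : ∀ v : Vertex, (a⁻¹ v).length = v.length := by
      intro v
      have h := ha1 (a⁻¹ v)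
      rw [Equiv.Perm.eq_inv_iff_eq.mp rfl] at h
      exact h.symm ▸ rfl
    refine ⟨hlen, fun v w => ?_⟩
    have htl : ((a⁻¹ (v ++ w)).take v.length).length = v.length := by
      rw [List.length_take, hlen, List.length_append]
      omega
    have key : a ((a⁻¹ (v ++ w)).take v.length) = v := by
      have h2 := ha2 ((a⁻¹ (v ++ w)).take v.length) ((a⁻¹ (v ++ w)).drop v.length)
      rw [List.take_append_drop, htl, Equiv.Perm.eq_inv_iff_eq.mp rfl] at h2
      rw [← h2]
      simpa using List.take_left (l₁ := v) (l₂ := w)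
    have h3 := congrArg (⇑a⁻¹) key
    rwa [Equiv.Perm.inv_eq_iff_eq.mpr rfl] at h3

/-- wreath recursion, forward map: `(g,h)σᵗ` -/
def wrFun (g h : Vertex → Vertex) (t : Bool) : Vertex → Vertex
  | [] => []
  | x :: v => (xor x t) :: (cond x (h v) (g v))

/-- wreath recursion, inverse map -/
def wrFunInv (g h : Vertex → Vertex) (t : Bool) : Vertex → Vertex
  | [] => []
  | y :: w => (xor y t) :: (cond (xor y t) (h w) (g w))

/-- `(g,h)σᵗ` as a permutation of the vertices. -/
def wrPerm (g h : Equiv.Perm Vertex) (t : Bool) : Equiv.Perm Vertex where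
  toFun := wrFun ⇑g ⇑h t
  invFun := wrFunInv ⇑g.symm ⇑h.symm t
  left_inv := by
    intro v
    cases v with
    | nil => rfl
    | cons x v => cases x <;> cases t <;> simp [wrFun, wrFunInv]
  right_inv := by
    intro v
    cases v with
    | nil => rfl
    | cons x v => cases x <;> cases t <;> simp [wrFun, wrFunInv]

/-- The element `(g,h)σᵗ` of `Ω`: acts on the first level by `σᵗ` (where `σ` is the
swap of the two level-one subtrees), with section `g` at the vertex `0` and section
`h` at the vertex `1`.  Thus `(γ₀,γ₁)τ` of the wreath recursion
`Ω ≃ (Ω × Ω) ⋊ S₂` is `wr γ₀ γ₁ t` (`t = true` iff `τ = σ`). -/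
def wr (g h : TreeAut) (t : Bool) : TreeAut :=
  ⟨wrPerm g.1 h.1 t, by
    have hg : IsTreeAutFun ⇑g.1 := g.2
    have hh : IsTreeAutFun ⇑h.1 := h.2
    constructor
    · intro v
      cases v with
      | nil => rfl
      | cons x v =>
        cases x <;> simp [wrPerm, wrFun, hg.1, hh.1]
    · intro v w
      cases v with
      | nil => simp [wrPerm, wrFun]
      | cons x v =>
        cases x <;> simp [wrPerm, wrFun, hg.2, hh.2]⟩

/-- Application of a tree automorphism to a vertex. -/
def ap (γ : TreeAut) (v : Vertex) : Vertex := γ.1 v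

/-- The permutation induced by `γ ∈ Ω` on level `n` of the tree. -/
def levelPerm (n : ℕ) (γ : TreeAut) : Equiv.Perm (List.Vector Bool n) where
  toFun v := ⟨γ.1 v.1, by
    have h : IsTreeAutFun ⇑γ.1 := γ.2
    rw [h.1 v.1]; exact v.2⟩
  invFun v := ⟨γ.1.symm v.1, by
    have h : IsTreeAutFun ⇑γ.1 := γ.2
    have h2 := h.1 (γ.1.symm v.1)
    rw [Equiv.apply_symm_apply] at h2
    exact h2.symm.trans v.2⟩
  left_inv v := Subtype.ext (Equiv.symm_apply_apply _ _)
  right_inv v := Subtype.ext (Equiv.apply_symm_apply _ _)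

/-- Restriction to level `n` as a group homomorphism. -/
def levelHom (n : ℕ) : TreeAut →* Equiv.Perm (List.Vector Bool n) where
  toFun := levelPerm n
  map_one' := Equiv.ext fun v => Subtype.ext rfl
  map_mul' := fun g h => Equiv.ext fun v => Subtype.ext rfl

/-- `sgn_n`: the sign of the permutation induced on level `n`. -/
def sgn (n : ℕ) (γ : TreeAut) : ℤˣ := Equiv.Perm.sign (levelPerm n γ)

/-- An odometer: acts as a single `2^n`-cycle on each level `n ≥ 1`. -/
def IsOdometer (γ : TreeAut) : Prop :=
  ∀ n : ℕ, 1 ≤ n → (levelPerm n γ).IsCycle ∧ (levelPerm n γ).support = Finset.univ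

/-- The profinite topology on `Ω`: the coarsest topology making all level
restrictions (to the discrete finite groups) continuous. -/
instance : TopologicalSpace TreeAut :=
  ⨅ n : ℕ, TopologicalSpace.induced (levelPerm n) ⊥

/-- A vertex `w` is in a stable cycle of `γ` of length `k`: its `γ`-orbit has exactly
`k` elements, and for every level `m` above the level of `w`, all level-`m` vertices
lying above this orbit are in one single `γ`-cycle (necessarily of length
`2^(m - n) * k`, which we record via the periodicity condition). -/
def InStableCycle (γ : TreeAut) (w : Vertex) (k : ℕ) : Prop :=
  0 < k ∧ ap (γ ^ k) w = w ∧ (∀ j : ℕ, 0 < j → j < k → ap (γ ^ j) w ≠ w) ∧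
  (∀ u : Vertex, w.length < u.length → (∃ i : ℕ, u.take w.length = ap (γ ^ i) w) →
    (ap (γ ^ (2 ^ (u.length - w.length) * k)) u = u ∧
      ∀ u' : Vertex, u'.length = u.length →
        (∃ i : ℕ, u'.take w.length = ap (γ ^ i) w) → ∃ j : ℕ, ap (γ ^ j) u = u'))

/-- Self-similar subgroup: closed under taking sections (here the section of `γ` at
the first-level vertex `x` is characterized by `(xv)γ = (x)γ ⬝ (v)γₓ`). -/
def SelfSimilar (H : Subgroup TreeAut) : Prop :=
  ∀ γ ∈ H, ∀ x : Bool, ∀ δ : TreeAut,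
    (∀ v : Vertex, ap γ (x :: v) = ap γ [x] ++ ap δ v) → δ ∈ H

/-!
Write a conjugator as `(a, b)τ`. Since `(γ₀, γ₁)σ` commutes with itself, multiplying the
conjugator by it flips `τ`, so we may assume `τ = 1`. The conjugacy equation then splits,
by the wreath recursion, into `b γ₀ = β₀ a` and `a γ₁ = β₁ b`, and in any group such `a, b`
exist exactly when `b` conjugates `γ₀ γ₁` to `β₀ β₁`.
-/

namespace TreeAut

variable (ζ : TreeAut)

lemma length_apply (v : Vertex) : (ζ.1 v).length = v.length := ζ.2.1 v

lemma apply_nil : ζ.1 [] = [] := List.length_eq_zero_iff.mp (length_apply ζ [])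

lemma take_apply_append (v w : Vertex) : (ζ.1 (v ++ w)).take v.length = ζ.1 v := ζ.2.2 v w

lemma apply_append (v w : Vertex) :
    ζ.1 (v ++ w) = ζ.1 v ++ (ζ.1 (v ++ w)).drop v.length := by
  conv_lhs => rw [← List.take_append_drop v.length (ζ.1 (v ++ w)), take_apply_append]

lemma apply_cons (x : Bool) (v : Vertex) : ζ.1 (x :: v) = ζ.1 [x] ++ (ζ.1 (x :: v)).tail := by
  simpa using apply_append ζ [x] v

def sectionPerm (x : Bool) : Equiv.Perm Vertex where
  toFun v := (ζ.1 (x :: v)).tail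
  invFun w := (ζ.1.symm (ζ.1 [x] ++ w)).tail
  left_inv v := by
    simp only [← apply_cons, Equiv.symm_apply_apply, List.tail_cons]
  right_inv w := by
    obtain ⟨y, hy⟩ := List.length_eq_one_iff.mp (length_apply ζ [x])
    have hinv : ζ.1.symm (y :: w) = x :: (ζ.1.symm (y :: w)).tail := by
      simpa [← hy] using apply_cons ζ⁻¹ y w
    simp only [hy, List.singleton_append]
    rw [← hinv, Equiv.apply_symm_apply, List.tail_cons]

lemma isTreeAutFun_sectionPerm (x : Bool) : IsTreeAutFun (sectionPerm ζ x) := by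
  refine ⟨fun v => by simp [sectionPerm, length_apply], fun v w => ?_⟩
  have h := take_apply_append ζ (x :: v) w
  rw [List.cons_append, List.length_cons] at h
  simp only [sectionPerm, Equiv.coe_fn_mk]
  rw [← h, List.tail_take_eq_take_tail, Nat.add_sub_cancel]

def sectionAt (x : Bool) : TreeAut := ⟨sectionPerm ζ x, isTreeAutFun_sectionPerm ζ x⟩

lemma apply_cons_eq_append_sectionAt (x : Bool) (v : Vertex) :
    ζ.1 (x :: v) = ζ.1 [x] ++ (sectionAt ζ x).1 v :=
  apply_cons ζ x v

lemma exists_eq_wr : ∃ a b : TreeAut, ∃ t : Bool, ζ = wr a b t := by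
  obtain ⟨t, ht⟩ := List.length_eq_one_iff.mp (length_apply ζ [false])
  obtain ⟨s, hs⟩ := List.length_eq_one_iff.mp (length_apply ζ [true])
  have hst : s = !t := by
    have h : ζ.1 [true] ≠ ζ.1 [false] := ζ.1.injective.ne (by simp)
    rw [hs, ht] at h
    cases s <;> cases t <;> simp_all
  refine ⟨sectionAt ζ false, sectionAt ζ true, t, Subtype.ext (Equiv.ext ?_)⟩
  rintro (_ | ⟨x, v⟩)
  · exact apply_nil ζ
  · rw [apply_cons_eq_append_sectionAt]
    cases x <;> cases t <;> simp [ht, hs, hst, wr, wrPerm, wrFun]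

end TreeAut

lemma wr_mul (a b c d : TreeAut) (t t' : Bool) :
    wr a b t * wr c d t' = wr (cond t' b a * c) (cond t' a b * d) (xor t t') := by
  refine Subtype.ext (Equiv.ext ?_)
  rintro (_ | ⟨x, v⟩)
  · rfl
  · cases x <;> cases t <;> cases t' <;> rfl

lemma wr_inj {a b a' b' : TreeAut} {t : Bool} : wr a b t = wr a' b' t ↔ a = a' ∧ b = b' := by
  refine ⟨fun h => ⟨Subtype.ext (Equiv.ext fun v => ?_), Subtype.ext (Equiv.ext fun v => ?_)⟩,
    fun ⟨ha, hb⟩ => ha ▸ hb ▸ rfl⟩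
  · simpa [wr, wrPerm, wrFun] using congrArg (fun ζ : TreeAut => ζ.1 (false :: v)) h
  · simpa [wr, wrPerm, wrFun] using congrArg (fun ζ : TreeAut => ζ.1 (true :: v)) h

lemma isConj_mul_iff_exists {G : Type*} [Group G] {g₀ g₁ h₀ h₁ : G} :
    IsConj (g₀ * g₁) (h₀ * h₁) ↔ ∃ a b : G, b * g₀ = h₀ * a ∧ a * g₁ = h₁ * b := by
  constructor
  · rintro ⟨c, hc⟩
    refine ⟨h₀⁻¹ * c * g₀, c, by group, ?_⟩
    calc h₀⁻¹ * c * g₀ * g₁ = h₀⁻¹ * (c * (g₀ * g₁)) := by group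
      _ = h₀⁻¹ * (h₀ * h₁ * c) := by rw [hc.eq]
      _ = h₁ * c := by group
  · rintro ⟨a, b, h₀a, h₁b⟩
    refine ⟨toUnits b, ?_⟩
    calc b * (g₀ * g₁) = h₀ * (a * g₁) := by rw [← mul_assoc, h₀a, mul_assoc]
      _ = h₀ * h₁ * b := by rw [h₁b, mul_assoc]

lemma semiconjBy_wr_false_iff {a b γ₀ γ₁ β₀ β₁ : TreeAut} :
    SemiconjBy (wr a b false) (wr γ₀ γ₁ true) (wr β₀ β₁ true) ↔
      b * γ₀ = β₀ * a ∧ a * γ₁ = β₁ * b := by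
  simp only [SemiconjBy, wr_mul, cond_true, cond_false, Bool.false_xor, Bool.xor_false]
  exact wr_inj

lemma isConj_wr_true_iff_exists_semiconjBy {γ₀ γ₁ δ : TreeAut} :
    IsConj (wr γ₀ γ₁ true) δ ↔ ∃ a b : TreeAut, SemiconjBy (wr a b false) (wr γ₀ γ₁ true) δ := by
  refine ⟨fun ⟨c, hc⟩ => ?_, fun ⟨a, b, h⟩ => ⟨toUnits (wr a b false), h⟩⟩
  obtain ⟨a, b, t, hab⟩ := TreeAut.exists_eq_wr c
  rw [hab] at hc
  cases t
  · exact ⟨a, b, hc⟩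
  · refine ⟨b * γ₀, a * γ₁, ?_⟩
    simpa [wr_mul] using hc.mul_left (Commute.refl (wr γ₀ γ₁ true))

/-- `(γ₀,γ₁)σ` is conjugate to `(β₀,β₁)σ` in `Ω` iff `γ₀γ₁` is
conjugate to `β₀β₁` in `Ω`. -/
theorem conj_wr_swap_iff (γ₀ γ₁ β₀ β₁ : TreeAut) :
    IsConj (wr γ₀ γ₁ true) (wr β₀ β₁ true) ↔ IsConj (γ₀ * γ₁) (β₀ * β₁) := by
  simp only [isConj_wr_true_iff_exists_semiconjBy, semiconjBy_wr_false_iff, isConj_mul_iff_exists]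

end BinTree
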